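/- Consider a DM two-way channel used for n channel uses with arbitrary (possibly adaptive) encoders: the time-i inputs satisfy X_{1,i} = f_{1,i}(S1^m, Y1^{i-1}) and X_{2,i} = f_{2,i}(S2^m, Y2^{i-1}) for deterministic functions f_{k,i}, and conditioned on (X_{1,i}, X_{2,i}) the output pair (Y_{1,i}, Y_{2,i}) is drawn from the per-letter law p(y1,y2|x1,x2) independently of (S1^m, S2^m) and of all past inputs and outputs. Then H(S1^m | S2^m) ≤ Σ_{i=1}^n I(X_{1,i}; Y_{2,i} | X_{2,i}) + H(S1^m | S2^m, Y2^n), and symmetrically H(S2^m | S1^m) ≤ Σ_{i=1}^n I(X_{2,i}; Y_{1,i} | X_{1,i}) + H(S2^m | S1^m, Y1^n). -/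

import Mathlib

open scoped BigOperators Classical

noncomputable section

/-- Probability that the random variable `X` equals `a`, under the pmf `μ`
on the finite sample space `Ω`. -/
def prD {Ω α : Type} [Fintype Ω] (μ : Ω → ℝ) (X : Ω → α) (a : α) : ℝ :=
  ∑ ω, if X ω = a then μ ω else 0

/-- Shannon entropy (in nats) of the random variable `X` under the pmf `μ`. -/
def ent {Ω α : Type} [Fintype Ω] [Fintype α] (μ : Ω → ℝ) (X : Ω → α) : ℝ :=
  -∑ a, prD μ X a * Real.log (prD μ X a)

/-- Conditional entropy `H(X | Y)` under the pmf `μ`. -/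
def condEnt {Ω α β : Type} [Fintype Ω] [Fintype α] [Fintype β]
    (μ : Ω → ℝ) (X : Ω → α) (Y : Ω → β) : ℝ :=
  ent μ (fun ω => (X ω, Y ω)) - ent μ Y

/-- Mutual information `I(X ; Y)` under the pmf `μ`. -/
def mutInf {Ω α β : Type} [Fintype Ω] [Fintype α] [Fintype β]
    (μ : Ω → ℝ) (X : Ω → α) (Y : Ω → β) : ℝ :=
  ent μ X + ent μ Y - ent μ (fun ω => (X ω, Y ω))

/-- Conditional mutual information `I(X ; Y | Z)` under the pmf `μ`. -/
def condMutInf {Ω α β γ : Type} [Fintype Ω] [Fintype α] [Fintype β] [Fintype γ]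
    (μ : Ω → ℝ) (X : Ω → α) (Y : Ω → β) (Z : Ω → γ) : ℝ :=
  condEnt μ X Z - condEnt μ X (fun ω => (Y ω, Z ω))

/-- `p` is a probability mass function on the finite type `α`. -/
def IsPmf {α : Type} [Fintype α] (p : α → ℝ) : Prop :=
  (∀ a, 0 ≤ p a) ∧ ∑ a, p a = 1


/-- The channel input at time `i` produced by an adaptive two-way encoder `f`,
which maps the user's source block and the user's past channel outputs to a
channel input symbol. -/
def twInput {S X Y : Type} {m n : ℕ}
    (f : ∀ i : Fin n, (Fin m → S) → (Fin i → Y) → X)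
    (sb : Fin m → S) (yb : Fin n → Y) (i : Fin n) : X :=
  f i sb (fun k => yb ⟨k.1, k.2.trans i.2⟩)

/-- Joint distribution of the source blocks and the channel output blocks of a
two-way channel driven by the adaptive encoders `f1, f2`: the sources are i.i.d. `pS`
and, at each time `i`, the output pair is drawn from the per-letter law `chan` applied
to the current inputs, independently of everything else. -/
def twMeasureAdaptive {S1 S2 X1 X2 Y1 Y2 : Type} [Fintype S1] [Fintype S2]
    (pS : S1 × S2 → ℝ) (chan : X1 → X2 → Y1 × Y2 → ℝ) (m n : ℕ)
    (f1 : ∀ i : Fin n, (Fin m → S1) → (Fin i → Y1) → X1)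
    (f2 : ∀ i : Fin n, (Fin m → S2) → (Fin i → Y2) → X2) :
    (Fin m → S1 × S2) × (Fin n → Y1 × Y2) → ℝ :=
  fun ω => (∏ i, pS (ω.1 i)) *
    ∏ j, chan (twInput f1 (fun i => (ω.1 i).1) (fun j' => (ω.2 j').1) j)
      (twInput f2 (fun i => (ω.1 i).2) (fun j' => (ω.2 j').2) j) (ω.2 j)

/-!
By the chain rule, `H(S1|S2) - H(S1|S2,Y2ⁿ) = Σᵢ I(S1; Y2ᵢ | S2, Y2^{i-1})`, whose `i`-th term is
`H(Y2ᵢ | S2, Y2^{i-1}) - H(Y2ᵢ | S1, S2, Y2^{i-1})`. Conditioning only on `X2ᵢ`, a function of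
`(S2, Y2^{i-1})`, can only increase the first entropy; conditioning on the whole past
`(S1, S2, Y1^{i-1}, Y2^{i-1})` can only decrease the second, and given the whole past the output
`Yᵢ` is drawn from the channel at the inputs `(X1ᵢ, X2ᵢ)`, so that entropy is
`H(Y2ᵢ | X1ᵢ, X2ᵢ)`. The second inequality is the same argument with the users exchanged.
-/

section Distribution

variable {Ω α β γ : Type} [Fintype Ω] (μ : Ω → ℝ)

lemma prD_nonneg (hμ : ∀ ω, 0 ≤ μ ω) (X : Ω → α) (a : α) : 0 ≤ prD μ X a :=
  Finset.sum_nonneg fun ω _ => by split_ifs <;> simp [hμ ω]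

lemma sum_prD_mul [Fintype α] (X : Ω → α) (h : α → ℝ) :
    ∑ a, prD μ X a * h a = ∑ ω, μ ω * h (X ω) := by
  simp only [prD, Finset.sum_mul, ite_mul, zero_mul]
  rw [Finset.sum_comm]
  exact Finset.sum_congr rfl fun ω _ =>
    (Finset.sum_ite_eq _ _ _).trans (if_pos (Finset.mem_univ _))

lemma sum_prD_comp_mul [Fintype α] [Fintype β] (V : Ω → α) (φ : α → β) (h : β → ℝ) :
    ∑ b, prD μ (fun ω => φ (V ω)) b * h b = ∑ a, prD μ V a * h (φ a) := by
  rw [sum_prD_mul, sum_prD_mul]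

lemma sum_prD [Fintype α] (X : Ω → α) : ∑ a, prD μ X a = ∑ ω, μ ω := by
  simpa using sum_prD_mul μ X fun _ => 1

lemma prD_comp [Fintype α] (V : Ω → α) (φ : α → β) (b : β) :
    prD μ (fun ω => φ (V ω)) b = ∑ a, if φ a = b then prD μ V a else 0 := by
  simpa [prD, mul_ite, eq_comm] using
    (sum_prD_mul μ V fun a => if φ a = b then (1 : ℝ) else 0).symm

lemma prD_le_prD_comp (hμ : ∀ ω, 0 ≤ μ ω) (V : Ω → α) (φ : α → β) (a : α) :
    prD μ V a ≤ prD μ (fun ω => φ (V ω)) (φ a) :=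
  Finset.sum_le_sum fun ω _ => by
    by_cases h : V ω = a
    · simp [h]
    · rw [if_neg h]; split_ifs <;> simp [hμ ω]

lemma prD_comp_of_injective {φ : α → β} (hφ : φ.Injective) (V : Ω → α) (a : α) :
    prD μ (fun ω => φ (V ω)) (φ a) = prD μ V a := by
  simp only [prD, hφ.eq_iff]

lemma sum_prD_pair_left [Fintype α] [Fintype β] (X : Ω → α) (V : Ω → β) (v : β) :
    ∑ a, prD μ (fun ω => (X ω, V ω)) (a, v) = prD μ V v := by
  rw [prD_comp μ (fun ω => (X ω, V ω)) Prod.snd, Fintype.sum_prod_type]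
  exact Finset.sum_congr rfl fun a _ => by simp

end Distribution

section Entropy

variable {Ω α β γ : Type} [Fintype Ω] [Fintype α] [Fintype β] [Fintype γ] (μ : Ω → ℝ)

lemma ent_comp_eq_neg_sum (V : Ω → α) (φ : α → β) :
    ent μ (fun ω => φ (V ω))
      = -∑ a, prD μ V a * Real.log (prD μ (fun ω => φ (V ω)) (φ a)) :=
  congrArg Neg.neg (sum_prD_comp_mul μ V φ _)

lemma ent_comp_of_injective {φ : α → β} (hφ : φ.Injective) (V : Ω → α) :
    ent μ (fun ω => φ (V ω)) = ent μ V := by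
  rw [ent_comp_eq_neg_sum]
  simp only [prD_comp_of_injective μ hφ, ent]

lemma condEnt_eq_of_injective (X : Ω → α) {V : Ω → β} {W : Ω → γ} {φ : β → γ}
    (hφ : φ.Injective) (hW : ∀ ω, W ω = φ (V ω)) : condEnt μ X W = condEnt μ X V := by
  have hXφ : (Prod.map id φ : α × β → α × γ).Injective := Function.injective_id.prodMap hφ
  simp only [condEnt, funext hW]
  rw [ent_comp_of_injective μ hφ]
  exact congrArg (· - ent μ V) (ent_comp_of_injective μ hXφ fun ω => (X ω, V ω))

lemma condMutInf_comm (X : Ω → α) (Y : Ω → β) (Z : Ω → γ) :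
    condMutInf μ X Y Z = condMutInf μ Y X Z := by
  have hswap : ent μ (fun ω => (Y ω, X ω, Z ω)) = ent μ (fun ω => (X ω, Y ω, Z ω)) :=
    ent_comp_of_injective μ (φ := fun p : α × β × γ => (p.2.1, p.1, p.2.2))
      (fun p q h => Prod.ext (congrArg (·.2.1) h)
        (Prod.ext (congrArg (·.1) h) (congrArg (·.2.2) h))) fun ω => (X ω, Y ω, Z ω)
  simp only [condMutInf, condEnt, hswap]
  ring

end Entropy

lemma mul_log_ratio_le {a b c d : ℝ} (ha : 0 ≤ a) (hab : a ≤ b) (hac : a ≤ c) (hbd : b ≤ d) :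
    a * (Real.log b + Real.log c - Real.log d - Real.log a) ≤ b * c / d - a := by
  rcases ha.eq_or_lt with rfl | ha
  · have hd : 0 ≤ d := hab.trans hbd
    simp only [zero_mul, sub_zero]
    positivity
  have hb : 0 < b := ha.trans_le hab
  have hc : 0 < c := ha.trans_le hac
  have hd : 0 < d := hb.trans_le hbd
  have key := Real.log_le_sub_one_of_pos (show 0 < b * c / (d * a) by positivity)
  rw [Real.log_div (by positivity) (by positivity), Real.log_mul hb.ne' hc.ne',
    Real.log_mul hd.ne' ha.ne'] at key
  calc a * (Real.log b + Real.log c - Real.log d - Real.log a)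
      ≤ a * (b * c / (d * a) - 1) := mul_le_mul_of_nonneg_left (by linarith) ha.le
    _ = b * c / d - a := by field_simp

section Submodularity

variable {Ω α β γ : Type} [Fintype Ω] [Fintype α] [Fintype β] [Fintype γ] (μ : Ω → ℝ)

lemma ent_triple_add_ent_le (hμ : ∀ ω, 0 ≤ μ ω) (X : Ω → α) (Y : Ω → β) (Z : Ω → γ) :
    ent μ (fun ω => (X ω, Y ω, Z ω)) + ent μ Z
      ≤ ent μ (fun ω => (X ω, Z ω)) + ent μ (fun ω => (Y ω, Z ω)) := by
  set V : Ω → α × β × γ := fun ω => (X ω, Y ω, Z ω)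
  set p := prD μ V
  set pXZ := prD μ (fun ω => (X ω, Z ω))
  set pYZ := prD μ (fun ω => (Y ω, Z ω))
  set pZ := prD μ Z
  have eXZ : ent μ (fun ω => (X ω, Z ω)) = -∑ v, p v * Real.log (pXZ (v.1, v.2.2)) :=
    ent_comp_eq_neg_sum μ V fun v => (v.1, v.2.2)
  have eYZ : ent μ (fun ω => (Y ω, Z ω)) = -∑ v, p v * Real.log (pYZ v.2) :=
    ent_comp_eq_neg_sum μ V Prod.snd
  have eZ : ent μ Z = -∑ v, p v * Real.log (pZ v.2.2) :=
    ent_comp_eq_neg_sum μ V fun v => v.2.2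
  -- termwise Gibbs inequality against `q = pXZ * pYZ / pZ`, via `log t ≤ t - 1`
  have hterm : ∀ v : α × β × γ,
      p v * (Real.log (pXZ (v.1, v.2.2)) + Real.log (pYZ v.2) - Real.log (pZ v.2.2)
        - Real.log (p v)) ≤ pXZ (v.1, v.2.2) * pYZ v.2 / pZ v.2.2 - p v := fun v =>
    mul_log_ratio_le (prD_nonneg μ hμ V v) (prD_le_prD_comp μ hμ V (fun v => (v.1, v.2.2)) v)
      (prD_le_prD_comp μ hμ V Prod.snd v)
      (prD_le_prD_comp μ hμ (fun ω => (X ω, Z ω)) Prod.snd (v.1, v.2.2))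
  -- summing out `x` turns `pXZ * pYZ / pZ` into `pYZ`, except where `pZ = 0`
  have hmass : ∑ v : α × β × γ, pXZ (v.1, v.2.2) * pYZ v.2 / pZ v.2.2 ≤ ∑ v, p v := by
    rw [Fintype.sum_prod_type, Finset.sum_comm, sum_prD, ← sum_prD μ fun ω => (Y ω, Z ω)]
    refine Finset.sum_le_sum fun w _ => ?_
    dsimp only
    rw [← Finset.sum_div, ← Finset.sum_mul, sum_prD_pair_left]
    rcases eq_or_ne (pZ w.2) 0 with h | h
    · simpa [h] using prD_nonneg μ hμ _ w
    · rw [mul_div_cancel_left₀ _ h]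
  have hsum := Finset.sum_le_sum fun v (_ : v ∈ Finset.univ) => hterm v
  simp only [mul_add, mul_sub, Finset.sum_add_distrib, Finset.sum_sub_distrib] at hsum
  rw [eXZ, eYZ, eZ, ent]
  linarith

lemma condEnt_pair_le (hμ : ∀ ω, 0 ≤ μ ω) (X : Ω → α) (Y : Ω → β) (Z : Ω → γ) :
    condEnt μ X (fun ω => (Y ω, Z ω)) ≤ condEnt μ X Z := by
  have := ent_triple_add_ent_le μ hμ X Y Z
  simp only [condEnt]
  linarith

lemma condEnt_le_of_comp (hμ : ∀ ω, 0 ≤ μ ω) (X : Ω → α) {V : Ω → β} {W : Ω → γ} (φ : β → γ)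
    (hW : ∀ ω, W ω = φ (V ω)) : condEnt μ X V ≤ condEnt μ X W := by
  rw [← condEnt_eq_of_injective μ X (φ := fun v => (v, φ v)) (fun _ _ h => congrArg Prod.fst h)
    (W := fun ω => (V ω, W ω)) fun ω => by rw [hW]]
  exact condEnt_pair_le μ hμ X V W

end Submodularity

section Kernel

variable {Ω α β γ τ : Type} [Fintype Ω] [Fintype α] [Fintype β] (μ : Ω → ℝ)

lemma ent_eq_sum_negMulLog (X : Ω → α) : ent μ X = ∑ a, Real.negMulLog (prD μ X a) := by
  simp only [ent, Real.negMulLog, neg_mul, Finset.sum_neg_distrib]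

lemma condEnt_eq_sum_of_kernel (X : Ω → α) (V : Ω → β) (K : β → α → ℝ)
    (hK : ∀ v, ∑ a, K v a = 1)
    (hfact : ∀ a v, prD μ (fun ω => (X ω, V ω)) (a, v) = prD μ V v * K v a) :
    condEnt μ X V = ∑ v, prD μ V v * ∑ a, Real.negMulLog (K v a) := by
  rw [condEnt, ent_eq_sum_negMulLog, ent_eq_sum_negMulLog, Fintype.sum_prod_type,
    Finset.sum_comm, sub_eq_iff_eq_add, ← Finset.sum_add_distrib]
  refine Finset.sum_congr rfl fun v _ => ?_
  simp only [hfact, Real.negMulLog_mul, Finset.sum_add_distrib, ← Finset.sum_mul,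
    ← Finset.mul_sum, hK, one_mul]
  ring

lemma prD_pair_comp_right_of_kernel (X : Ω → α) (V : Ω → β) (g : β → γ) (K : γ → α → ℝ)
    (hfact : ∀ a v, prD μ (fun ω => (X ω, V ω)) (a, v) = prD μ V v * K (g v) a) (a : α) (t : γ) :
    prD μ (fun ω => (X ω, g (V ω))) (a, t) = prD μ (fun ω => g (V ω)) t * K t a := by
  refine (prD_comp μ (fun ω => (X ω, V ω)) (Prod.map id g) (a, t)).trans ?_
  rw [prD_comp, Finset.sum_mul, Fintype.sum_prod_type, Finset.sum_comm]
  refine Finset.sum_congr rfl fun v _ => ?_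
  by_cases hv : g v = t
  · simp [hv, hfact]
  · simp [hv]

lemma prD_pair_comp_left_of_kernel (Y : Ω → α) (W : Ω → β) (K : β → α → ℝ)
    (hfact : ∀ y w, prD μ (fun ω => (Y ω, W ω)) (y, w) = prD μ W w * K w y) (φ : α → τ)
    (b : τ) (w : β) :
    prD μ (fun ω => (φ (Y ω), W ω)) (b, w) = prD μ W w * ∑ y, if φ y = b then K w y else 0 := by
  refine (prD_comp μ (fun ω => (Y ω, W ω)) (Prod.map φ id) (b, w)).trans ?_
  rw [Finset.mul_sum, Fintype.sum_prod_type]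
  refine Finset.sum_congr rfl fun y _ => ?_
  by_cases hy : φ y = b
  · simp [hy, hfact]
  · simp [hy]

lemma condEnt_eq_condEnt_comp_of_kernel [Fintype γ] (X : Ω → α) (V : Ω → β) (g : β → γ)
    (K : γ → α → ℝ) (hK : ∀ t, ∑ a, K t a = 1)
    (hfact : ∀ a v, prD μ (fun ω => (X ω, V ω)) (a, v) = prD μ V v * K (g v) a) :
    condEnt μ X V = condEnt μ X (fun ω => g (V ω)) := by
  rw [condEnt_eq_sum_of_kernel μ X V (fun v => K (g v)) (fun v => hK (g v)) hfact,
    condEnt_eq_sum_of_kernel μ X _ K hK (prD_pair_comp_right_of_kernel μ X V g K hfact)]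
  exact (sum_prD_comp_mul μ V g fun t => ∑ a, Real.negMulLog (K t a)).symm

end Kernel

/- One channel use: `W` is the whole past, `U` the receiver's view of it, `X₂` the receiver's
input and `g W` the pair of inputs, through which alone the output `Y` depends on `W`. -/
lemma condMutInf_le_of_kernel {Ω α ζ τ υ ρ ξ₁ ξ₂ : Type} [Fintype Ω] [Fintype α] [Fintype ζ]
    [Fintype τ] [Fintype υ] [Fintype ρ] [Fintype ξ₁] [Fintype ξ₂] (μ : Ω → ℝ)
    (hμ : ∀ ω, 0 ≤ μ ω) {A : Ω → α} {U : Ω → υ} {W : Ω → ρ} {X₁ : Ω → ξ₁} {X₂ : Ω → ξ₂}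
    (Y : Ω → ζ) (φ : ζ → τ)
    (fAU : ρ → α × υ) (hAU : ∀ ω, (A ω, U ω) = fAU (W ω))
    (f₂ : υ → ξ₂) (hX₂ : ∀ ω, X₂ ω = f₂ (U ω))
    (g : ρ → ξ₁ × ξ₂) (hX : ∀ ω, (X₁ ω, X₂ ω) = g (W ω))
    (K : ξ₁ × ξ₂ → ζ → ℝ) (hK : ∀ x, ∑ y, K x y = 1)
    (hfact : ∀ y w, prD μ (fun ω => (Y ω, W ω)) (y, w) = prD μ W w * K (g w) y) :
    condMutInf μ A (fun ω => φ (Y ω)) U ≤ condMutInf μ X₁ (fun ω => φ (Y ω)) X₂ := by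
  set T := fun ω => φ (Y ω)
  have hK' : ∀ x, ∑ b, ∑ y, (if φ y = b then K x y else 0) = 1 := fun x => by
    rw [Finset.sum_comm]
    simpa using hK x
  have hmarkov : condEnt μ T W = condEnt μ T fun ω => (X₁ ω, X₂ ω) := by
    rw [funext hX]
    exact condEnt_eq_condEnt_comp_of_kernel μ T W g _ hK'
      (prD_pair_comp_left_of_kernel μ Y W (fun w => K (g w)) hfact φ)
  have hpast : condEnt μ T W ≤ condEnt μ T fun ω => (A ω, U ω) :=
    condEnt_le_of_comp μ hμ T fAU hAU
  have hinput : condEnt μ T U ≤ condEnt μ T X₂ := condEnt_le_of_comp μ hμ T f₂ hX₂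
  rw [condMutInf_comm, condMutInf_comm μ X₁]
  simp only [condMutInf]
  linarith

lemma condEnt_eq_sum_condMutInf_add {Ω α β ζ : Type} [Fintype Ω] [Fintype α] [Fintype β]
    [Fintype ζ] (μ : Ω → ℝ) {n : ℕ} (A : Ω → α) (B : Ω → β) (Z : Ω → Fin n → ζ) :
    condEnt μ A B = ∑ i : Fin n, condMutInf μ A (fun ω => Z ω i)
        (fun ω => (B ω, Fin.take i i.2.le (Z ω))) + condEnt μ A (fun ω => (B ω, Z ω)) := by
  let G : ℕ → ℝ := fun t =>
    if h : t ≤ n then condEnt μ A (fun ω => (B ω, Fin.take t h (Z ω))) else 0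
  have hstep : ∀ i : Fin n, condMutInf μ A (fun ω => Z ω i)
      (fun ω => (B ω, Fin.take i i.2.le (Z ω))) = G i - G (i + 1) := by
    intro i
    have hsnoc : (fun p : ζ × β × (Fin i → ζ) =>
        ((p.2.1, Fin.snoc (α := fun _ => ζ) p.2.2 p.1) : β × (Fin (i + 1) → ζ))).Injective :=
      fun p q h => by
        obtain ⟨h₁, h₂⟩ := Prod.mk.inj h
        obtain ⟨h₃, h₄⟩ := Fin.snoc_injective2 h₂
        exact Prod.ext h₄ (Prod.ext h₁ h₃)
    simp only [G, dif_pos i.2.le, dif_pos (show (i : ℕ) + 1 ≤ n from i.2)]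
    exact congrArg _ (condEnt_eq_of_injective μ A hsnoc
      fun ω => by rw [Fin.take_succ_eq_snoc]).symm
  have h0 : G 0 = condEnt μ A B := by
    simp only [G, dif_pos n.zero_le]
    exact condEnt_eq_of_injective μ A (φ := fun b => (b, (Fin.elim0 : Fin 0 → ζ)))
      (fun _ _ h => congrArg Prod.fst h) fun ω => congrArg _ (Subsingleton.elim _ _)
  have hn : G n = condEnt μ A (fun ω => (B ω, Z ω)) := by
    simp only [G, dif_pos le_rfl, Fin.take_eq_self]
  rw [Finset.sum_congr rfl fun i _ => hstep i,
    Fin.sum_univ_eq_sum_range (fun t => G t - G (t + 1)), Finset.sum_range_sub', h0, hn]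
  ring

lemma Fin.take_snoc_of_le {P : Type} {m n : ℕ} (h : m ≤ n) (v : Fin n → P) (a : P) :
    Fin.take m (h.trans n.le_succ) (Fin.snoc v a : Fin (n + 1) → P) = Fin.take m h v := by
  rw [← Fin.take_init, Fin.init_snoc]

section CausalChain

variable {P : Type}

/-- The weight of an output sequence `y` whose `j`-th letter is drawn from the kernel
`c j (y₀, …, y_{j-1})`. -/
def chainProd {n : ℕ} (c : ∀ j : Fin n, (Fin j → P) → P → ℝ) (y : Fin n → P) : ℝ :=
  ∏ j, c j (Fin.take j j.2.le y) (y j)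

lemma chainProd_snoc {n : ℕ} (c : ∀ j : Fin (n + 1), (Fin j → P) → P → ℝ) (v : Fin n → P)
    (a : P) :
    chainProd c (Fin.snoc v a) = chainProd (fun j => c j.castSucc) v * c (Fin.last n) v a := by
  rw [chainProd, Fin.prod_univ_castSucc, Fin.snoc_last]
  congr 1
  · refine Finset.prod_congr rfl fun j _ => ?_
    rw [Fin.snoc_castSucc]
    exact congrArg (c j.castSucc · (v j)) (Fin.take_snoc_of_le j.2.le v a)
  · exact congrArg (c (Fin.last n) · a) (Fin.take_snoc_of_le le_rfl v a)

lemma sum_chainProd_take [Fintype P] {t n : ℕ} (h : t ≤ n)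
    (c : ∀ j : Fin n, (Fin j → P) → P → ℝ) (hc : ∀ j u, ∑ a, c j u a = 1) (F : (Fin t → P) → ℝ) :
    ∑ y, F (Fin.take t h y) * chainProd c y
      = ∑ v, F v * chainProd (fun j : Fin t => c (Fin.castLE h j)) v := by
  induction n, h using Nat.le_induction with
  | base => rfl
  | succ n h ih =>
    rw [← (Fin.snocEquiv fun _ => P).sum_comp, Fintype.sum_prod_type, Finset.sum_comm]
    refine (Finset.sum_congr rfl fun v _ => ?_).trans (ih _ fun j => hc j.castSucc)
    change ∑ a : P, F (Fin.take t (h.trans n.le_succ) (Fin.snoc (α := fun _ => P) v a))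
        * chainProd c (Fin.snoc (α := fun _ => P) v a) = _
    simp only [Fin.take_snoc_of_le h, chainProd_snoc, ← mul_assoc, ← Finset.mul_sum, hc, mul_one]

end CausalChain

section SourcedChain

variable {S P : Type} {n : ℕ} (π : S → ℝ)
  (c : S → ∀ j : Fin n, (Fin j → P) → P → ℝ)

def chainMeasure (ω : S × (Fin n → P)) : ℝ := π ω.1 * chainProd (c ω.1) ω.2

lemma prD_take_chainMeasure [Fintype S] [Fintype P] (hc : ∀ s j u, ∑ a, c s j u a = 1)
    {t : ℕ} (h : t ≤ n) (s : S) (v : Fin t → P) :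
    prD (chainMeasure π c) (fun ω => (ω.1, Fin.take t h ω.2)) (s, v)
      = π s * chainProd (fun j : Fin t => c s (Fin.castLE h j)) v := by
  have := sum_chainProd_take h (c s) (hc s) fun u => if u = v then π s else 0
  simp only [ite_mul, zero_mul, Finset.sum_ite_eq', Finset.mem_univ, if_true] at this
  simp only [prD, chainMeasure]
  rw [← this, Fintype.sum_prod_type, Finset.sum_comm]
  simp only [Prod.mk.injEq, ite_and, Finset.sum_ite_eq', Finset.mem_univ, if_true]

lemma prD_output_past_chainMeasure [Fintype S] [Fintype P] (hc : ∀ s j u, ∑ a, c s j u a = 1)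
    (i : Fin n) (a : P) (w : S × (Fin i → P)) :
    prD (chainMeasure π c) (fun ω => (ω.2 i, (ω.1, Fin.take i i.2.le ω.2))) (a, w)
      = prD (chainMeasure π c) (fun ω => (ω.1, Fin.take i i.2.le ω.2)) w * c w.1 i w.2 a := by
  obtain ⟨s, u⟩ := w
  let ψ : S × (Fin (i + 1) → P) → P × S × (Fin i → P) := fun p =>
    (p.2 (Fin.last i), p.1, Fin.init p.2)
  have hψ : ψ.Injective := fun p q h => by
    obtain ⟨h₁, h₂⟩ := Prod.mk.inj h
    obtain ⟨h₃, h₄⟩ := Prod.mk.inj h₂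
    exact Prod.ext h₃ (by rw [← Fin.snoc_init_self p.2, ← Fin.snoc_init_self q.2, h₁, h₄])
  have hV : ∀ ω : S × (Fin n → P),
      (ω.2 i, (ω.1, Fin.take i i.2.le ω.2)) = ψ (ω.1, Fin.take (i + 1) i.2 ω.2) := fun ω => by
    simp [ψ, Fin.take_succ_eq_snoc]
  have hw : (a, s, u) = ψ (s, Fin.snoc u a) := by simp [ψ]
  rw [funext hV, hw, prD_comp_of_injective _ hψ, prD_take_chainMeasure π c hc,
    prD_take_chainMeasure π c hc, chainProd_snoc, mul_assoc]
  rfl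

end SourcedChain

section TwoWay

variable {S1 S2 X1 X2 Y1 Y2 : Type} [Fintype S1] [Fintype S2] {m n : ℕ}
  (f1 : ∀ i : Fin n, (Fin m → S1) → (Fin i → Y1) → X1)
  (f2 : ∀ i : Fin n, (Fin m → S2) → (Fin i → Y2) → X2)

def twPastInputs (i : Fin n) (w : (Fin m → S1 × S2) × (Fin i → Y1 × Y2)) : X1 × X2 :=
  (f1 i (fun k => (w.1 k).1) (fun k => (w.2 k).1), f2 i (fun k => (w.1 k).2) (fun k => (w.2 k).2))

lemma twMeasureAdaptive_nonneg {pS : S1 × S2 → ℝ} (hpS : ∀ s, 0 ≤ pS s)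
    {chan : X1 → X2 → Y1 × Y2 → ℝ} (hchan : ∀ x1 x2 y, 0 ≤ chan x1 x2 y)
    (ω : (Fin m → S1 × S2) × (Fin n → Y1 × Y2)) : 0 ≤ twMeasureAdaptive pS chan m n f1 f2 ω :=
  mul_nonneg (Finset.prod_nonneg fun _ _ => hpS _) (Finset.prod_nonneg fun _ _ => hchan _ _ _)

lemma prD_output_past_twMeasureAdaptive [Fintype Y1] [Fintype Y2] (pS : S1 × S2 → ℝ)
    {chan : X1 → X2 → Y1 × Y2 → ℝ} (hchan : ∀ x1 x2, ∑ y, chan x1 x2 y = 1) (i : Fin n)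
    (y : Y1 × Y2) (w : (Fin m → S1 × S2) × (Fin i → Y1 × Y2)) :
    prD (twMeasureAdaptive pS chan m n f1 f2)
        (fun ω => (ω.2 i, (ω.1, Fin.take i i.2.le ω.2))) (y, w)
      = prD (twMeasureAdaptive pS chan m n f1 f2) (fun ω => (ω.1, Fin.take i i.2.le ω.2)) w
        * chan (twPastInputs f1 f2 i w).1 (twPastInputs f1 f2 i w).2 y :=
  prD_output_past_chainMeasure (fun s : Fin m → S1 × S2 => ∏ k, pS (s k))
    (fun s j v => chan (twPastInputs f1 f2 j (s, v)).1 (twPastInputs f1 f2 j (s, v)).2)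
    (fun _ _ _ => hchan _ _) i y w

end TwoWay

/-- For a DM two-way channel with arbitrary adaptive encoders
`X_{1,i} = f_{1,i}(S1^m, Y1^{i-1})`, `X_{2,i} = f_{2,i}(S2^m, Y2^{i-1})`:
`H(S1^m|S2^m) ≤ Σ_i I(X_{1,i}; Y_{2,i} | X_{2,i}) + H(S1^m|S2^m, Y2^n)` and
`H(S2^m|S1^m) ≤ Σ_i I(X_{2,i}; Y_{1,i} | X_{1,i}) + H(S2^m|S1^m, Y1^n)`. -/
theorem two_way_core_inequality
    {S1 S2 X1 X2 Y1 Y2 : Type}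
    [Fintype S1] [Fintype S2] [Fintype X1] [Fintype X2] [Fintype Y1] [Fintype Y2]
    (pS : S1 × S2 → ℝ) (hpS : IsPmf pS)
    (chan : X1 → X2 → Y1 × Y2 → ℝ) (hchan : ∀ x1 x2, IsPmf (chan x1 x2))
    (m n : ℕ)
    (f1 : ∀ i : Fin n, (Fin m → S1) → (Fin i → Y1) → X1)
    (f2 : ∀ i : Fin n, (Fin m → S2) → (Fin i → Y2) → X2) :
    (condEnt (twMeasureAdaptive pS chan m n f1 f2)
        (fun ω => fun i => (ω.1 i).1) (fun ω => fun i => (ω.1 i).2) ≤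
      (∑ i : Fin n, condMutInf (twMeasureAdaptive pS chan m n f1 f2)
        (fun ω => twInput f1 (fun k => (ω.1 k).1) (fun j => (ω.2 j).1) i)
        (fun ω => (ω.2 i).2)
        (fun ω => twInput f2 (fun k => (ω.1 k).2) (fun j => (ω.2 j).2) i)) +
      condEnt (twMeasureAdaptive pS chan m n f1 f2)
        (fun ω => fun i => (ω.1 i).1)
        (fun ω => ((fun i => (ω.1 i).2), (fun j => (ω.2 j).2)))) ∧
    (condEnt (twMeasureAdaptive pS chan m n f1 f2)
        (fun ω => fun i => (ω.1 i).2) (fun ω => fun i => (ω.1 i).1) ≤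
      (∑ i : Fin n, condMutInf (twMeasureAdaptive pS chan m n f1 f2)
        (fun ω => twInput f2 (fun k => (ω.1 k).2) (fun j => (ω.2 j).2) i)
        (fun ω => (ω.2 i).1)
        (fun ω => twInput f1 (fun k => (ω.1 k).1) (fun j => (ω.2 j).1) i)) +
      condEnt (twMeasureAdaptive pS chan m n f1 f2)
        (fun ω => fun i => (ω.1 i).2)
        (fun ω => ((fun i => (ω.1 i).1), (fun j => (ω.2 j).1)))) := by
  have hμ := twMeasureAdaptive_nonneg f1 f2 hpS.1 fun x1 x2 => (hchan x1 x2).1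
  have hrow : ∀ x1 x2, ∑ y, chan x1 x2 y = 1 := fun x1 x2 => (hchan x1 x2).2
  have hfact := prD_output_past_twMeasureAdaptive f1 f2 pS hrow
  constructor
  · rw [condEnt_eq_sum_condMutInf_add _ _ _ fun ω j => (ω.2 j).2]
    gcongr with i
    exact condMutInf_le_of_kernel _ hμ (fun ω => ω.2 i) Prod.snd
      (fun w => (fun k => (w.1 k).1, fun k => (w.1 k).2, fun k => (w.2 k).2)) (fun _ => rfl)
      (fun u => f2 i u.1 u.2) (fun _ => rfl) (twPastInputs f1 f2 i) (fun _ => rfl)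
      (fun x => chan x.1 x.2) (fun x => hrow x.1 x.2) (hfact i)
  · rw [condEnt_eq_sum_condMutInf_add _ _ _ fun ω j => (ω.2 j).1]
    gcongr with i
    exact condMutInf_le_of_kernel _ hμ (fun ω => ω.2 i) Prod.fst
      (fun w => (fun k => (w.1 k).2, fun k => (w.1 k).1, fun k => (w.2 k).1)) (fun _ => rfl)
      (fun u => f1 i u.1 u.2) (fun _ => rfl) (fun w => (twPastInputs f1 f2 i w).swap)
      (fun _ => rfl) (fun x => chan x.2 x.1) (fun x => hrow x.2 x.1) (hfact i)
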